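/- arXiv:2510.18274 — 6 statements merged into one kernel-verified Lean document; each statement's English description precedes it below -/
import Mathlib

section
/- Let F = (V, E) be a directed acyclic graph on n vertices with positive integer edge weights whose edge multiset can be partitioned into f directed s–t paths (a non-circular flow of value f), and suppose every edge weight is at most W. Then the total weight of F satisfies w(F) ≤ C·n·√(f·W) for some universal constant C. -/
/-- The list of consecutive (directed) edges of a walk given by its vertex list. -/
def walkEdges {V : Type*} (l : List V) : List (V × V) := l.zip l.tail

/-!
Number the vertices injectively by `ψ : V → {0, …, n-1}` along a topological order and call
`ψ v - ψ u` the length of the edge `uv`. The length of an `s`–`t` path telescopes to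
`ψ t - ψ s < n`, so the weighted total length `∑ w_e ℓ_e` of the flow is at most `f n`.
Hence the edges longer than `L` carry weight at most `f n / L`, while there are at most `n L`
edges of length at most `L` (an edge is determined by its tail and its length), carrying weight
at most `W n L`. Taking `L = √(f / W)` gives `w(F) ≤ 2 n √(f W)`.
-/

open Finset

section RankBy

variable {V β : Type*} [Fintype V] [LinearOrder β] (g : V → β)

def rankBy (v : V) : ℕ := #{u | g u < g v}

lemma rankBy_lt_rankBy {u v : V} (h : g u < g v) : rankBy g u < rankBy g v := by
  refine card_lt_card ⟨fun x hx => ?_, fun hsub => ?_⟩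
  · simp only [mem_filter, mem_univ, true_and] at hx ⊢
    exact hx.trans h
  · have hu : u ∈ ({x | g x < g u} : Finset V) := hsub (by simpa using h)
    simp at hu

lemma rankBy_lt_card (v : V) : rankBy g v < Fintype.card V :=
  card_lt_card ⟨subset_univ _, fun hsub => by simpa using hsub (mem_univ v)⟩

lemma rankBy_injective (hg : Function.Injective g) : Function.Injective (rankBy g) := by
  intro u v huv
  by_contra hne
  rcases lt_or_gt_of_ne (hg.ne hne) with h | h
  · exact (rankBy_lt_rankBy g h).ne huv
  · exact (rankBy_lt_rankBy g h).ne' huv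

end RankBy

lemma exists_topological_numbering {V β : Type*} [Fintype V] [LinearOrder β]
    (φ : V → β) :
    ∃ ψ : V → ℕ, Function.Injective ψ ∧ (∀ v, ψ v < Fintype.card V) ∧
      ∀ u v, φ u < φ v → ψ u < ψ v := by
  classical
  -- break the ties of `φ` by an arbitrary enumeration of `V`
  let g : V → β ×ₗ Fin (Fintype.card V) := fun v => toLex (φ v, Fintype.equivFin V v)
  have hg : Function.Injective g := fun u v h =>
    (Fintype.equivFin V).injective (congrArg Prod.snd (toLex.injective h))
  exact ⟨rankBy g, rankBy_injective g hg, rankBy_lt_card g,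
    fun u v h => rankBy_lt_rankBy g (Prod.Lex.toLex_lt_toLex.2 (Or.inl h))⟩

lemma sum_map_walkEdges_sub {V G : Type*} [AddCommGroup G] (g : V → G) :
    ∀ {l : List V} {a b : V}, l.head? = some a → l.getLast? = some b →
      ((walkEdges l).map fun e => g e.2 - g e.1).sum = g b - g a
  | [], _, _, ha, _ => by simp at ha
  | [x], a, b, ha, hb => by
    simp only [List.head?_cons, List.getLast?_singleton, Option.some.injEq] at ha hb
    subst ha hb
    simp [walkEdges]
  | x :: y :: l, a, b, ha, hb => by
    simp only [List.head?_cons, Option.some.injEq] at ha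
    subst ha
    rw [List.getLast?_cons_cons] at hb
    change (((x, y) :: walkEdges (y :: l)).map fun e => g e.2 - g e.1).sum = _
    rw [List.map_cons, List.sum_cons, sum_map_walkEdges_sub g rfl hb]
    abel

lemma sum_map_eq_sum_count_smul {α M : Type*} [BEq α] [LawfulBEq α] [AddCommMonoid M]
    {l : List α} {E : Finset α} (hl : ∀ p ∈ l, p ∈ E) (h : α → M) :
    (l.map h).sum = ∑ p ∈ E, l.count p • h p := by
  induction l with
  | nil => simp
  | cons a l ih =>
    have ha : a ∈ E := hl a List.mem_cons_self
    rw [List.map_cons, List.sum_cons, ih fun p hp => hl p (List.mem_cons_of_mem a hp)]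
    simp only [List.count_cons, add_smul, sum_add_distrib, ite_smul, one_smul, zero_smul]
    rw [add_comm, sum_eq_single_of_mem a ha fun b _ hba => if_neg (by simpa using hba.symm),
      if_pos (beq_self_eq_true a)]

lemma sum_nsmul_sub_eq_of_decomposition {V G : Type*} [DecidableEq V] [AddCommGroup G]
    {f : ℕ} (E : Finset (V × V)) (w : V × V → ℕ) (s t : V) (paths : Fin f → List V)
    (g : V → G) (hpath : ∀ i, (paths i).head? = some s ∧ (paths i).getLast? = some t)
    (hpathE : ∀ i, ∀ p ∈ walkEdges (paths i), p ∈ E)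
    (hcount : ∀ p ∈ E, w p = ∑ i, (walkEdges (paths i)).count p) :
    ∑ p ∈ E, w p • (g p.2 - g p.1) = f • (g t - g s) :=
  calc ∑ p ∈ E, w p • (g p.2 - g p.1)
      = ∑ p ∈ E, ∑ i, (walkEdges (paths i)).count p • (g p.2 - g p.1) :=
        sum_congr rfl fun p hp => by rw [hcount p hp, sum_smul]
    _ = ∑ i, ((walkEdges (paths i)).map fun p => g p.2 - g p.1).sum := by
        rw [sum_comm]
        exact sum_congr rfl fun i _ => (sum_map_eq_sum_count_smul (hpathE i) _).symm
    _ = f • (g t - g s) := by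
        simp [sum_map_walkEdges_sub g (hpath _).1 (hpath _).2, smul_sub]

lemma sum_le_sum_mul_div_add_card_filter_mul {ι : Type*} (E : Finset ι) (w ℓ : ι → ℝ)
    {W L : ℝ} (hL : 0 < L) (hw : ∀ e ∈ E, 0 ≤ w e ∧ w e ≤ W) (hℓ : ∀ e ∈ E, 0 ≤ ℓ e) :
    ∑ e ∈ E, w e ≤ (∑ e ∈ E, w e * ℓ e) / L + #{e ∈ E | ℓ e ≤ L} * W := by
  classical
  rw [card_filter, Nat.cast_sum, sum_mul, sum_div, ← sum_add_distrib]
  refine sum_le_sum fun e he => ?_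
  obtain ⟨hw0, hwW⟩ := hw e he
  split_ifs with h
  · have : 0 ≤ w e * ℓ e / L := div_nonneg (mul_nonneg hw0 (hℓ e he)) hL.le
    push_cast
    linarith
  · rw [Nat.cast_zero, zero_mul, add_zero, le_div_iff₀ hL]
    exact mul_le_mul_of_nonneg_left (not_le.1 h).le hw0

lemma card_filter_lt_and_sub_le_le_card_mul {V : Type*} [Fintype V] [DecidableEq V]
    {ψ : V → ℕ} (hψ : Function.Injective ψ) {L : ℝ} (hL : 0 ≤ L) :
    (#{e : V × V | ψ e.1 < ψ e.2 ∧ (ψ e.2 : ℝ) - ψ e.1 ≤ L} : ℝ) ≤ Fintype.card V * L := by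
  have hcard : #{e : V × V | ψ e.1 < ψ e.2 ∧ (ψ e.2 : ℝ) - ψ e.1 ≤ L}
      ≤ #(univ ×ˢ Icc 1 ⌊L⌋₊ : Finset (V × ℕ)) := by
    refine card_le_card_of_injOn (fun e => (e.1, ψ e.2 - ψ e.1)) (fun e he => ?_) ?_
    · simp only [coe_filter, mem_univ, true_and, Set.mem_ofPred_eq] at he
      simp only [coe_product, coe_univ, coe_Icc, Set.mem_prod, Set.mem_univ, Set.mem_Icc,
        true_and]
      refine ⟨by omega, Nat.le_floor ?_⟩
      rw [Nat.cast_sub he.1.le]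
      exact he.2
    · intro e he e' he' hee'
      simp only [coe_filter, mem_univ, true_and, Set.mem_ofPred_eq] at he he'
      simp only [Prod.mk.injEq] at hee'
      obtain ⟨h1, h2⟩ := hee'
      rw [h1] at h2
      exact Prod.ext h1 (hψ (by omega))
  calc (#{e : V × V | ψ e.1 < ψ e.2 ∧ (ψ e.2 : ℝ) - ψ e.1 ≤ L} : ℝ)
      ≤ Fintype.card V * ⌊L⌋₊ := by
        rw [card_product, card_univ, Nat.card_Icc, Nat.add_sub_cancel] at hcard
        exact_mod_cast hcard
    _ ≤ Fintype.card V * L := by gcongr; exact Nat.floor_le hL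

lemma sum_le_two_mul_sqrt {ι : Type*} (E : Finset ι) (w ℓ : ι → ℝ) {n f W : ℝ}
    (hf : 0 < f) (hW : 0 < W) (hw : ∀ e ∈ E, 0 ≤ w e ∧ w e ≤ W) (hℓ : ∀ e ∈ E, 0 ≤ ℓ e)
    (hmass : ∑ e ∈ E, w e * ℓ e ≤ f * n)
    (hshort : ∀ L, 0 < L → #{e ∈ E | ℓ e ≤ L} ≤ n * L) :
    ∑ e ∈ E, w e ≤ 2 * n * Real.sqrt (f * W) := by
  set r := Real.sqrt (f * W)
  have hr : 0 < r := Real.sqrt_pos.2 (by positivity)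
  have hr2 : r ^ 2 = f * W := Real.sq_sqrt (by positivity)
  -- `L = r / W = √(f / W)` balances the two terms of the bound
  have hL : 0 < r / W := by positivity
  calc ∑ e ∈ E, w e
      ≤ (∑ e ∈ E, w e * ℓ e) / (r / W) + #{e ∈ E | ℓ e ≤ r / W} * W :=
        sum_le_sum_mul_div_add_card_filter_mul E w ℓ hL hw hℓ
    _ ≤ f * n / (r / W) + n * (r / W) * W := by gcongr; exact hshort _ hL
    _ = 2 * n * r := by
        field_simp
        rw [hr2]
        ring

/-- If a directed acyclic graph `E` on `n` vertices with positive integer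
edge weights bounded by `W` has its weighted edge multiset exactly decomposed into `f`
directed `s`–`t` paths, then its total weight is at most `C · n · √(f·W)` for a universal
constant `C`. -/
theorem flow_cover_weighted :
    ∃ C : ℝ, 0 < C ∧
      ∀ (n f W : ℕ) (E : Finset (Fin n × Fin n)) (w : Fin n × Fin n → ℕ)
        (s t : Fin n) (φ : Fin n → ℕ) (paths : Fin f → List (Fin n)),
        (∀ p ∈ E, φ p.1 < φ p.2) →
        (∀ p ∈ E, 1 ≤ w p ∧ w p ≤ W) →
        (∀ i, (paths i).head? = some s ∧ (paths i).getLast? = some t) →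
        (∀ i, ∀ p ∈ walkEdges (paths i), p ∈ E) →
        (∀ p ∈ E, w p = ∑ i, (walkEdges (paths i)).count p) →
        (∑ p ∈ E, (w p : ℝ)) ≤ C * n * Real.sqrt ((f : ℝ) * W) := by
  refine ⟨2, two_pos, fun n f W E w s t φ paths hφ hw hpath hpathE hcount => ?_⟩
  rcases E.eq_empty_or_nonempty with rfl | ⟨e₀, he₀⟩
  · simp only [sum_empty]
    positivity
  have hW : 0 < W := by have := hw e₀ he₀; omega
  have hf : 0 < f := Nat.pos_of_ne_zero fun hf0 => by
    subst hf0
    simpa using (hw e₀ he₀).1.trans_eq (hcount e₀ he₀)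
  obtain ⟨ψ, hψinj, hψlt, hψφ⟩ := exists_topological_numbering φ
  rw [Fintype.card_fin] at hψlt
  have hψE : ∀ e ∈ E, ψ e.1 < ψ e.2 := fun e he => hψφ _ _ (hφ e he)
  have hmass : ∑ e ∈ E, (w e : ℝ) * ((ψ e.2 : ℝ) - ψ e.1) ≤ f * n := by
    have h := sum_nsmul_sub_eq_of_decomposition E w s t paths (fun v => (ψ v : ℝ)) hpath
      hpathE hcount
    simp only [nsmul_eq_mul] at h
    rw [h]
    gcongr
    linarith [(ψ s).cast_nonneg (α := ℝ), (Nat.cast_lt (α := ℝ)).2 (hψlt t)]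
  refine sum_le_two_mul_sqrt E _ _ (by exact_mod_cast hf) (by exact_mod_cast hW)
    (fun e he => ⟨(w e).cast_nonneg, by exact_mod_cast (hw e he).2⟩)
    (fun e he => sub_nonneg.2 (by exact_mod_cast (hψE e he).le)) hmass fun L hL => ?_
  refine le_trans ?_ ((card_filter_lt_and_sub_le_le_card_mul hψinj hL.le).trans_eq
    (by rw [Fintype.card_fin]))
  exact Nat.cast_le.2 (card_le_card fun e he =>
    mem_filter.2 ⟨mem_univ _, hψE e (mem_filter.1 he).1, (mem_filter.1 he).2⟩)
end

section
/- Let F = (V, E) be a directed acyclic graph on n vertices whose edge set can be partitioned into f edge-disjoint directed s–t paths. Then |E| ≤ C·n·√f for some universal constant C. -/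
theorem exists_injective_rank_of_lt {α β : Type*} [Fintype α] [LinearOrder β] (φ : α → β) :
    ∃ ψ : α → ℕ, Function.Injective ψ ∧ (∀ v, ψ v < Fintype.card α) ∧
      ∀ a b, φ a < φ b → ψ a < ψ b := by
  let key : α → β ×ₗ Fin (Fintype.card α) := fun v => toLex (φ v, Fintype.equivFin α v)
  have key_inj : Function.Injective key := fun a b h =>
    (Fintype.equivFin α).injective (Prod.ext_iff.1 (toLex.injective h)).2
  let _ : LinearOrder α := LinearOrder.lift' key key_inj
  let o := (Fintype.orderIsoFinOfCardEq α rfl).symm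
  refine ⟨fun v => o v, Fin.val_injective.comp o.injective, fun v => (o v).isLt, fun a b h => ?_⟩
  have hab : a < b := show key a < key b from Prod.Lex.toLex_lt_toLex.2 (.inl h)
  exact o.strictMono hab

theorem List.sum_count_eq_countP {α : Type*} [DecidableEq α] [BEq α] [LawfulBEq α]
    (S : Finset α) (l : List α) : ∑ x ∈ S, l.count x = l.countP (· ∈ S) := by
  obtain rfl : ‹BEq α› = instBEqOfDecidableEq := lawful_beq_subsingleton _ _
  rw [← Finset.sum_filter_count_eq_countP]
  refine (Finset.sum_subset (fun x hx => (Finset.mem_filter.1 hx).2) fun x _ hx => ?_).symm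
  simp_all [List.count_eq_zero]

theorem Finset.card_eq_sum_countP_of_sum_count_eq_one {α ι : Type*} [DecidableEq α] [BEq α]
    [LawfulBEq α] [Fintype ι] {S : Finset α} {ls : ι → List α}
    (hcount : ∀ x ∈ S, ∑ i, (ls i).count x = 1) :
    S.card = ∑ i, (ls i).countP (· ∈ S) := by
  calc S.card = ∑ x ∈ S, ∑ i, (ls i).count x := by
        rw [Finset.card_eq_sum_ones]; exact Finset.sum_congr rfl fun x hx => (hcount x hx).symm
    _ = ∑ i, ∑ x ∈ S, (ls i).count x := Finset.sum_comm
    _ = ∑ i, (ls i).countP (· ∈ S) := by simp only [List.sum_count_eq_countP]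

section Jumps

variable {V : Type*}

def jump (ψ : V → ℕ) (p : V × V) : ℕ := ψ p.2 - ψ p.1

variable {ψ : V → ℕ}

theorem walkEdges_cons_cons (a b : V) (l : List V) :
    walkEdges (a :: b :: l) = (a, b) :: walkEdges (b :: l) := rfl

theorem mul_countP_le_jump_add_lt {N : ℕ} (L : ℕ) (a : V) (l : List V)
    (hmono : ∀ p ∈ walkEdges (a :: l), ψ p.1 < ψ p.2) (hN : ∀ v ∈ a :: l, ψ v < N) :
    L * (walkEdges (a :: l)).countP (L ≤ jump ψ ·) + ψ a < N := by
  induction l generalizing a with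
  | nil => simpa [walkEdges] using hN a (by simp)
  | cons b l ih =>
    rw [walkEdges_cons_cons] at hmono ⊢
    have hab : ψ a < ψ b := hmono (a, b) List.mem_cons_self
    have ih := ih b (fun p hp => hmono p (List.mem_cons_of_mem _ hp))
      (fun v hv => hN v (List.mem_cons_of_mem _ hv))
    have hjump : jump ψ (a, b) = ψ b - ψ a := rfl
    rw [List.countP_cons]
    by_cases hlong : L ≤ jump ψ (a, b)
    · simp only [hlong, decide_true, if_true, mul_add, mul_one]
      omega
    · simp only [hlong, decide_false, Bool.false_eq_true, if_false, add_zero]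
      omega

theorem mul_countP_le_jump_le {N : ℕ} (L : ℕ) (l : List V)
    (hmono : ∀ p ∈ walkEdges l, ψ p.1 < ψ p.2) (hN : ∀ v ∈ l, ψ v < N) :
    L * (walkEdges l).countP (L ≤ jump ψ ·) ≤ N := by
  cases l with
  | nil => simp [walkEdges]
  | cons a l => exact (Nat.le_add_right _ _).trans (mul_countP_le_jump_add_lt L a l hmono hN).le

variable {E : Finset (V × V)}

theorem card_filter_jump_lt_le [Fintype V] (hinj : Function.Injective ψ)
    (hmono : ∀ p ∈ E, ψ p.1 < ψ p.2) (L : ℕ) :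
    (E.filter (jump ψ · < L)).card ≤ Fintype.card V * (L - 1) := by
  calc (E.filter (jump ψ · < L)).card
      ≤ ((Finset.univ : Finset V) ×ˢ Finset.Ico 1 L).card := by
        refine Finset.card_le_card_of_injOn (fun p => (p.1, jump ψ p)) (fun p hp => ?_)
          fun p hp q hq hpq => ?_
        · rw [Finset.mem_coe, Finset.mem_filter] at hp
          have := hmono p hp.1
          simp only [Finset.coe_product, Finset.coe_univ, Set.mem_prod, Set.mem_univ, true_and,
            Finset.coe_Ico, Set.mem_Ico, jump] at hp ⊢
          omega
        · rw [Finset.mem_coe, Finset.mem_filter] at hp hq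
          obtain ⟨h1, hjump⟩ := Prod.mk.inj hpq
          have := hmono p hp.1
          have := hmono q hq.1
          have h2 : ψ p.2 = ψ q.2 := by simp only [jump, h1] at hjump ⊢; omega
          exact Prod.ext h1 (hinj h2)
    _ = Fintype.card V * (L - 1) := by simp

theorem mul_card_filter_le_jump_le [DecidableEq V] [BEq V] [LawfulBEq V] {ι : Type*} [Fintype ι]
    {N : ℕ} (L : ℕ) (walks : ι → List V)
    (hN : ∀ v, ψ v < N) (hmono : ∀ p ∈ E, ψ p.1 < ψ p.2)
    (hmem : ∀ i, ∀ p ∈ walkEdges (walks i), p ∈ E)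
    (hcount : ∀ p ∈ E, ∑ i, (walkEdges (walks i)).count p = 1) :
    L * (E.filter (L ≤ jump ψ ·)).card ≤ Fintype.card ι * N := by
  rw [Finset.card_eq_sum_countP_of_sum_count_eq_one
    fun p hp => hcount p (Finset.mem_filter.1 hp).1, Finset.mul_sum]
  calc ∑ i, L * (walkEdges (walks i)).countP (· ∈ E.filter (L ≤ jump ψ ·))
      ≤ ∑ i, L * (walkEdges (walks i)).countP (L ≤ jump ψ ·) := by
        gcongr with i
        exact List.countP_mono_left fun p _ hp => by simp_all
    _ ≤ ∑ _i : ι, N := Finset.sum_le_sum fun i _ =>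
        mul_countP_le_jump_le L _ (fun p hp => hmono p (hmem i p hp)) fun v _ => hN v
    _ = Fintype.card ι * N := by simp

end Jumps

theorem cast_le_mul_sqrt_of_sqrt_add_one_mul_le {b f n : ℕ} (h : (Nat.sqrt f + 1) * b ≤ f * n) :
    (b : ℝ) ≤ n * √f := by
  rcases Nat.eq_zero_or_pos f with rfl | hf
  · simp_all
  have hsqrt_pos : 0 < √(f : ℝ) := Real.sqrt_pos.2 (by exact_mod_cast hf)
  have hsqrt_le : √(f : ℝ) ≤ Nat.sqrt f + 1 := by
    rw [Real.sqrt_le_left (by positivity), sq]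
    exact_mod_cast (Nat.lt_succ_sqrt f).le
  refine le_of_mul_le_mul_left ?_ hsqrt_pos
  calc √(f : ℝ) * b ≤ (Nat.sqrt f + 1) * b := by gcongr
    _ ≤ f * n := by exact_mod_cast h
    _ = √(f : ℝ) * (n * √f) := by
        rw [mul_left_comm, Real.mul_self_sqrt (Nat.cast_nonneg f), mul_comm]

/-- If a directed acyclic graph `E` on `n` vertices has its edge set
exactly partitioned into `f` edge-disjoint directed `s`–`t` paths, then
`|E| ≤ C · n · √f` for a universal constant `C`. -/
theorem flow_cover :
    ∃ C : ℝ, 0 < C ∧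
      ∀ (n f : ℕ) (E : Finset (Fin n × Fin n))
        (s t : Fin n) (φ : Fin n → ℕ) (paths : Fin f → List (Fin n)),
        (∀ p ∈ E, φ p.1 < φ p.2) →
        (∀ i, (paths i).head? = some s ∧ (paths i).getLast? = some t) →
        (∀ i, ∀ p ∈ walkEdges (paths i), p ∈ E) →
        (∀ p ∈ E, (∑ i, (walkEdges (paths i)).count p) = 1) →
        (E.card : ℝ) ≤ C * n * Real.sqrt f := by
  refine ⟨2, two_pos, fun n f E s t φ paths hφ _ hmem hcount => ?_⟩
  obtain ⟨ψ, hψ_inj, hψ_lt, hψ_mono⟩ := exists_injective_rank_of_lt φ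
  have hE : ∀ p ∈ E, ψ p.1 < ψ p.2 := fun p hp => hψ_mono _ _ (hφ p hp)
  set L := Nat.sqrt f + 1
  have hshort : ((E.filter (jump ψ · < L)).card : ℝ) ≤ n * √f := by
    have hcard := card_filter_jump_lt_le hψ_inj hE L
    rw [Fintype.card_fin, Nat.add_sub_cancel] at hcard
    calc _ ≤ (n * Nat.sqrt f : ℝ) := by exact_mod_cast hcard
      _ ≤ n * √f := by gcongr; exact Real.nat_sqrt_le_real_sqrt
  have hlong : ((E.filter (L ≤ jump ψ ·)).card : ℝ) ≤ n * √f := by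
    have hcard := mul_card_filter_le_jump_le L paths hψ_lt hE hmem hcount
    rw [Fintype.card_fin, Fintype.card_fin] at hcard
    exact cast_le_mul_sqrt_of_sqrt_add_one_mul_le hcard
  rw [← Finset.card_filter_add_card_filter_not (jump ψ · < L)]
  simp only [not_lt]
  push_cast
  linarith
end

section
/- Let P be a k-forest packing of an undirected unweighted graph G, i.e., P = F₁ ∪ … ∪ F_k where each F_i is a spanning forest of G \ (F₁ ∪ … ∪ F_{i−1}). Then for every cut (S,T): (a) if |E_G(S,T)| ≤ k then E_P(S,T) = E_G(S,T); and (b) if |E_G(S,T)| ≥ k+1 then |E_P(S,T)| ≥ k. -/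
/-!
Let `P₀ ⊆ P₁ ⊆ ⋯ ⊆ P_k = P` be the unions of the first `i` forests. As long as `Pᵢ` misses a cut
edge `ab` of `G`, that edge survives in `G \ Pᵢ`, so the next forest connects `a` to `b`; a path
from `S` to `Sᶜ` uses a cut edge, which is new since `Fᵢ` avoids `Pᵢ`. Hence every round either
already holds all cut edges of `G` or adds a cut edge, giving `min k |E_G(S,Sᶜ)| ≤ |E_P(S,Sᶜ)|`.
-/

open Finset SimpleGraph

variable {V : Type*} [Fintype V] [DecidableEq V]

open scoped Classical in
/-- The number of edges of `H` crossing the partition `(S, Sᶜ)`. -/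
noncomputable def crossCount (H : SimpleGraph V) (S : Finset V) : ℕ :=
  ∑ a ∈ S, ∑ b ∈ Sᶜ, if H.Adj a b then 1 else 0

/-- `F` is a spanning forest of `G`: a maximal acyclic subgraph, equivalently an acyclic
subgraph such that the endpoints of every edge of `G` are connected in `F`. -/
def IsSpanningForestOf (F G : SimpleGraph V) : Prop :=
  F ≤ G ∧ F.IsAcyclic ∧ ∀ a b, G.Adj a b → F.Reachable a b

/-- `P` is a `k`-forest packing of `G`: `P = F₁ ∪ … ∪ F_k` where each `F_i` is a spanning
forest of `G` minus the previously chosen forests. -/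
def IsKForestPacking (k : ℕ) (G P : SimpleGraph V) : Prop :=
  ∃ F : Fin k → SimpleGraph V,
    P = (⨆ i, F i) ∧
    ∀ i : Fin k, IsSpanningForestOf (F i) (G \ ⨆ j : Fin k, ⨆ _ : j < i, F j)

section CrossCount

variable {G H : SimpleGraph V} {S : Finset V} {a b : V}

open scoped Classical in
lemma crossCount_eq_card (H : SimpleGraph V) (S : Finset V) :
    crossCount H S = #{p ∈ S ×ˢ Sᶜ | H.Adj p.1 p.2} := by
  rw [crossCount, card_filter, sum_product]

lemma crossCount_le_crossCount (h : ∀ a ∈ S, ∀ b ∉ S, H.Adj a b → G.Adj a b) :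
    crossCount H S ≤ crossCount G S := by
  classical
  rw [crossCount_eq_card, crossCount_eq_card]
  refine card_le_card fun p hp => ?_
  simp only [mem_filter, mem_product, mem_compl] at hp ⊢
  exact ⟨hp.1, h _ hp.1.1 _ hp.1.2 hp.2⟩

lemma crossCount_mono (h : H ≤ G) : crossCount H S ≤ crossCount G S :=
  crossCount_le_crossCount fun _ _ _ _ hab => h hab

lemma crossCount_lt_crossCount (hle : H ≤ G) (ha : a ∈ S) (hb : b ∉ S) (hG : G.Adj a b)
    (hH : ¬ H.Adj a b) : crossCount H S < crossCount G S := by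
  classical
  rw [crossCount_eq_card, crossCount_eq_card]
  refine card_lt_card ⟨fun p hp => ?_, fun hsub => hH ?_⟩
  · simp only [mem_filter] at hp ⊢
    exact ⟨hp.1, hle hp.2⟩
  have hab : (a, b) ∈ ({p ∈ S ×ˢ Sᶜ | G.Adj p.1 p.2} : Finset (V × V)) := by
    simp [ha, hb, hG]
  exact (mem_filter.mp (hsub hab)).2

lemma adj_iff_adj_of_crossCount_le (hle : H ≤ G) (hcount : crossCount G S ≤ crossCount H S)
    (ha : a ∈ S) (hb : b ∉ S) : G.Adj a b ↔ H.Adj a b :=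
  ⟨fun hG => by_contra fun hH => (crossCount_lt_crossCount hle ha hb hG hH).not_ge hcount,
    fun hH => hle hH⟩

/-- A walk in `F` from `S` to `Sᶜ` has a dart leaving `S`, and that edge is not in `H`. -/
lemma crossCount_lt_sup_of_reachable {F : SimpleGraph V} (hFH : Disjoint F H)
    (hreach : F.Reachable a b) (ha : a ∈ S) (hb : b ∉ S) :
    crossCount H S < crossCount (H ⊔ F) S := by
  obtain ⟨w⟩ := hreach
  obtain ⟨d, -, hd₁, hd₂⟩ := w.exists_boundary_dart S (mod_cast ha) (mod_cast hb)
  have hnotH : ¬ H.Adj d.fst d.snd := fun hH => hFH.le_bot (show (F ⊓ H).Adj _ _ from ⟨d.adj, hH⟩)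
  exact crossCount_lt_crossCount le_sup_left (mod_cast hd₁) (mod_cast hd₂) (Or.inr d.adj) hnotH

lemma crossCount_lt_sup_of_isSpanningForestOf {F : SimpleGraph V}
    (hF : IsSpanningForestOf F (G \ H)) (ha : a ∈ S) (hb : b ∉ S) (hG : G.Adj a b)
    (hH : ¬ H.Adj a b) : crossCount H S < crossCount (H ⊔ F) S :=
  crossCount_lt_sup_of_reachable (disjoint_sdiff_self_left.mono_left hF.1)
    (hF.2.2 a b ((sdiff_adj _ _ _ _).mpr ⟨hG, hH⟩)) ha hb

end CrossCount

section Packing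

variable {W : Type*} {k : ℕ} (F : Fin k → SimpleGraph W)

def packingPrefix (i : ℕ) : SimpleGraph W :=
  ⨆ j : Fin k, ⨆ _ : (j : ℕ) < i, F j

lemma packingPrefix_succ (i : Fin k) : packingPrefix F (i + 1) = packingPrefix F i ⊔ F i := by
  ext a b
  simp only [packingPrefix, iSup_adj, sup_adj]
  constructor
  · rintro ⟨j, hj, hab⟩
    rcases Nat.lt_succ_iff_lt_or_eq.mp hj with hj | hj
    · exact Or.inl ⟨j, hj, hab⟩
    · exact Or.inr (Fin.ext hj ▸ hab)
  · rintro (⟨j, hj, hab⟩ | hab)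
    · exact ⟨j, hj.trans i.val.lt_succ_self, hab⟩
    · exact ⟨i, i.val.lt_succ_self, hab⟩

lemma packingPrefix_self : packingPrefix F k = ⨆ j, F j := by
  ext a b
  simp [packingPrefix, iSup_adj]

lemma IsKForestPacking.le {G P : SimpleGraph W} (hP : IsKForestPacking k G P) : P ≤ G := by
  obtain ⟨F, rfl, hF⟩ := hP
  exact iSup_le fun i => (hF i).1.trans sdiff_le

end Packing

lemma IsKForestPacking.min_le_crossCount {k : ℕ} {G P : SimpleGraph V}
    (hP : IsKForestPacking k G P) (S : Finset V) :
    min k (crossCount G S) ≤ crossCount P S := by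
  obtain ⟨F, rfl, hF⟩ := hP
  suffices h : ∀ i ≤ k, min i (crossCount G S) ≤ crossCount (packingPrefix F i) S by
    simpa [packingPrefix_self] using h k le_rfl
  intro i
  induction i with
  | zero => simp
  | succ i ih =>
    intro hik
    let ι : Fin k := ⟨i, hik⟩
    have hstep := packingPrefix_succ F ι
    have hmono : crossCount (packingPrefix F i) S ≤ crossCount (packingPrefix F (i + 1)) S :=
      crossCount_mono (hstep ▸ le_sup_left)
    by_cases hall : ∀ a ∈ S, ∀ b ∉ S, G.Adj a b → (packingPrefix F i).Adj a b
    · have := crossCount_le_crossCount hall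
      omega
    · simp only [not_forall, exists_prop] at hall
      obtain ⟨a, ha, b, hb, hG, hnot⟩ := hall
      have hlt : crossCount (packingPrefix F i) S < crossCount (packingPrefix F (i + 1)) S :=
        hstep ▸ crossCount_lt_sup_of_isSpanningForestOf (hF ι) ha hb hG hnot
      have := ih (Nat.le_of_succ_le hik)
      omega

/-- Let `P` be a `k`-forest packing of `G`.  For every cut `(S, Sᶜ)`:
(a) if `|E_G(S,Sᶜ)| ≤ k` then `E_P(S,Sᶜ) = E_G(S,Sᶜ)`; and (b) if `|E_G(S,Sᶜ)| ≥ k+1`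
then `|E_P(S,Sᶜ)| ≥ k`. -/
theorem kforest_packing_cut (G : SimpleGraph V) (k : ℕ) (P : SimpleGraph V)
    (hP : IsKForestPacking k G P) (S : Finset V) :
    (crossCount G S ≤ k → ∀ a b, a ∈ S → b ∉ S → (G.Adj a b ↔ P.Adj a b)) ∧
    (k + 1 ≤ crossCount G S → k ≤ crossCount P S) := by
  have hmin := hP.min_le_crossCount S
  refine ⟨fun hle a b ha hb => adj_iff_adj_of_crossCount_le hP.le ?_ ha hb, fun hge => ?_⟩
  · rwa [min_eq_right hle] at hmin
  · rwa [min_eq_left (by omega)] at hmin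
end

section
/- An ℓ-assignment is a sequence A = ((p₁,q₁),…,(p_ℓ,q_ℓ)) with each (p_i,q_i) ∈ {1,2,3} × {1,2} and p_i ≠ p_{i+1} for all i. A pair (i,j) ∈ [ℓ]² is matched by A if p_i = p_j and q_i ≠ q_j. Then there exists a set of t = O(log ℓ) assignments such that every pair (i,j) with |i−j| ≥ 2 is matched by at least one assignment in the set. -/
/-!
Write a position as `2m + r` with `r ∈ {0, 1}` and let `g` be the binary reflected Gray code,
which is injective and changes exactly one bit from `g m` to `g (m + 1)`. For each bit `k` below
`N = ⌊log₂ ℓ⌋` take two assignments, both with `q = g_k(m)`.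

With `p = r`, a same-parity pair is matched as soon as the Gray codes of the halves differ in
bit `k`, which happens for some `k` by injectivity.

With `p(2m) = g_k(m)`, the odd position `2m + 1` sits between the colours `g_k(m)` and
`g_k(m + 1)`; it gets the third colour `2` if they differ and the complement of their common value
otherwise. Then `2a` and `2b + 1` are matched as soon as `g_k(a) ≠ g_k(b) = g_k(b + 1)`. For
`a ∉ {b, b + 1}`, `g a` differs from both `g b` and `g (b + 1)`, which differ only in one bit `s`,
so some bit `k ≠ s` separates `g a` from `g b`.
-/

/-- An `ℓ`-assignment: a sequence `((p₁,q₁),…,(p_ℓ,q_ℓ))` with each `(p_i,q_i)` in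
`{1,2,3} × {1,2}` and `p_i ≠ p_{i+1}` for all consecutive `i`. -/
def IsAssignment (ℓ : ℕ) (A : Fin ℓ → Fin 3 × Fin 2) : Prop :=
  ∀ i : ℕ, ∀ h : i + 1 < ℓ, (A ⟨i, by omega⟩).1 ≠ (A ⟨i + 1, h⟩).1

namespace Nat

def gray (n : ℕ) : ℕ := n ^^^ n / 2

theorem gray_xor (m n : ℕ) : gray (m ^^^ n) = gray m ^^^ gray n := by
  simp only [gray, xor_div_two]
  ac_rfl

theorem gray_eq_zero_iff {n : ℕ} : gray n = 0 ↔ n = 0 := by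
  refine ⟨fun h => ?_, fun h => by simp [h, gray]⟩
  have : n = n / 2 := Nat.xor_eq_zero_iff.mp h
  omega

theorem gray_injective : Function.Injective gray := fun m n h => by
  rwa [← Nat.xor_eq_zero_iff, ← gray_eq_zero_iff, gray_xor, Nat.xor_eq_zero_iff]

theorem gray_lt_two_pow {n N : ℕ} (h : n < 2 ^ N) : gray n < 2 ^ N :=
  xor_lt_two_pow h ((div_le_self n 2).trans_lt h)

theorem exists_xor_add_one_eq_two_pow_sub_one (n : ℕ) :
    ∃ s, n ^^^ (n + 1) = 2 ^ (s + 1) - 1 := by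
  induction n using Nat.strong_induction_on with
  | _ n ih =>
    obtain ⟨m, rfl | rfl⟩ := n.even_or_odd'
    · refine ⟨0, ?_⟩
      rw [show 2 * m + 1 = bit true m from (bit_true_apply m).symm,
        show 2 * m = bit false m from (bit_false_apply m).symm, xor_bit]
      simp
    · obtain ⟨s, hs⟩ := ih m (by omega)
      refine ⟨s + 1, ?_⟩
      rw [show 2 * m + 1 + 1 = bit false (m + 1) by rw [bit_false_apply]; ring,
        show 2 * m + 1 = bit true m from (bit_true_apply m).symm, xor_bit, hs]
      simp only [Bool.bne_false, bit_true_apply, pow_succ]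
      have := Nat.one_le_two_pow (n := s)
      omega

theorem gray_two_pow_sub_one (s : ℕ) : gray (2 ^ (s + 1) - 1) = 2 ^ s := by
  have half : (2 ^ (s + 1) - 1) / 2 = 2 ^ s - 1 := by
    rw [pow_succ]; omega
  apply eq_of_testBit_eq
  intro i
  simp only [gray, half, testBit_xor, testBit_two_pow_sub_one, testBit_two_pow]
  by_cases h : i < s <;> by_cases h' : s = i <;> simp [h, h'] <;> omega

theorem exists_gray_xor_gray_add_one_eq_two_pow (n : ℕ) :
    ∃ s, gray n ^^^ gray (n + 1) = 2 ^ s := by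
  obtain ⟨s, hs⟩ := exists_xor_add_one_eq_two_pow_sub_one n
  exact ⟨s, by rw [← gray_xor, hs, gray_two_pow_sub_one]⟩

theorem exists_testBit_ne_and_eq {x y z s : ℕ} (hxy : x ≠ y) (hxz : x ≠ z)
    (hyz : y ^^^ z = 2 ^ s) : ∃ k, x.testBit k ≠ y.testBit k ∧ y.testBit k = z.testBit k := by
  have hyz_bit (k : ℕ) : y.testBit k ≠ z.testBit k ↔ s = k := by
    rw [← Bool.xor_iff_ne, ← testBit_xor, hyz, testBit_two_pow, decide_eq_true_iff]
  by_contra! h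
  obtain ⟨k, hk⟩ := exists_testBit_ne_of_ne hxy
  obtain rfl : s = k := (hyz_bit k).1 (h k hk)
  refine hxz (eq_of_testBit_eq fun i => ?_)
  by_cases his : s = i
  · subst his
    have hyz_s := (hyz_bit s).2 rfl
    grind
  · have hyi : y.testBit i = z.testBit i := not_not.1 (mt (hyz_bit i).1 his)
    have hxi : x.testBit i = y.testBit i := not_not.1 (mt ((hyz_bit i).1 ∘ h i) his)
    rw [hxi, hyi]

theorem lt_of_testBit_ne {x y k N : ℕ} (hx : x < 2 ^ N) (hy : y < 2 ^ N)
    (h : x.testBit k ≠ y.testBit k) : k < N := by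
  by_contra! hk
  exact h <| by rw [testBit_lt_two_pow (hx.trans_le (pow_le_pow_right₀ one_le_two hk)),
    testBit_lt_two_pow (hy.trans_le (pow_le_pow_right₀ one_le_two hk))]

end Nat

open Nat

def Matches {α : Type*} (A : α → Fin 3 × Fin 2) (i j : α) : Prop :=
  (A i).1 = (A j).1 ∧ (A i).2 ≠ (A j).2

theorem Matches.symm {α : Type*} {A : α → Fin 3 × Fin 2} {i j : α} (h : Matches A i j) :
    Matches A j i :=
  ⟨h.1.symm, h.2.symm⟩

theorem isAssignment_of_fst_ne_succ {A : ℕ → Fin 3 × Fin 2} (h : ∀ n, (A n).1 ≠ (A (n + 1)).1)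
    (ℓ : ℕ) : IsAssignment ℓ (fun i => A i) :=
  fun i _ => h i

def grayBit (k m : ℕ) : Bool := (gray m).testBit k

def parityAssignment (k n : ℕ) : Fin 3 × Fin 2 :=
  (if n % 2 = 0 then 0 else 1, if grayBit k (n / 2) then 1 else 0)

def grayAssignment (k n : ℕ) : Fin 3 × Fin 2 :=
  let b := grayBit k (n / 2)
  (if n % 2 = 0 then (if b then 1 else 0)
    else if b = grayBit k (n / 2 + 1) then (if b then 0 else 1) else 2,
   if b then 1 else 0)

theorem ite_one_zero_inj {a b : Bool} :
    ((if a then 1 else 0 : Fin 2) = if b then 1 else 0) ↔ a = b := by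
  cases a <;> cases b <;> decide

theorem grayAssignment_two_mul (k m : ℕ) :
    grayAssignment k (2 * m) =
      (if grayBit k m then 1 else 0, if grayBit k m then 1 else 0) := by
  simp [grayAssignment]

theorem grayAssignment_two_mul_add_one (k m : ℕ) :
    grayAssignment k (2 * m + 1) =
      (if grayBit k m = grayBit k (m + 1) then (if grayBit k m then 0 else 1) else 2,
        if grayBit k m then 1 else 0) := by
  simp [grayAssignment, Nat.add_div]

theorem parityAssignment_fst_ne_succ (k n : ℕ) :
    (parityAssignment k n).1 ≠ (parityAssignment k (n + 1)).1 := by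
  obtain ⟨m, rfl | rfl⟩ := n.even_or_odd' <;> simp [parityAssignment, Nat.add_mod]

theorem grayAssignment_fst_ne_succ (k n : ℕ) :
    (grayAssignment k n).1 ≠ (grayAssignment k (n + 1)).1 := by
  obtain ⟨m, rfl | rfl⟩ := n.even_or_odd'
  · rw [grayAssignment_two_mul, grayAssignment_two_mul_add_one]
    cases grayBit k m <;> cases grayBit k (m + 1) <;> decide
  · rw [show 2 * m + 1 + 1 = 2 * (m + 1) by ring, grayAssignment_two_mul,
      grayAssignment_two_mul_add_one]
    cases grayBit k m <;> cases grayBit k (m + 1) <;> decide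

theorem parityAssignment_matches {k i j : ℕ} (hij : i % 2 = j % 2)
    (hk : grayBit k (i / 2) ≠ grayBit k (j / 2)) : Matches (parityAssignment k) i j :=
  ⟨by simp [parityAssignment, hij], by simpa [parityAssignment, ite_one_zero_inj] using hk⟩

theorem grayAssignment_matches {k a b : ℕ} (hab : grayBit k a ≠ grayBit k b)
    (hb : grayBit k b = grayBit k (b + 1)) : Matches (grayAssignment k) (2 * a) (2 * b + 1) := by
  rw [Matches, grayAssignment_two_mul, grayAssignment_two_mul_add_one, if_pos hb]
  revert hab; cases grayBit k a <;> cases grayBit k b <;> decide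

theorem exists_grayBit_ne {N a b : ℕ} (ha : a < 2 ^ N) (hb : b < 2 ^ N) (hab : a ≠ b) :
    ∃ k < N, grayBit k a ≠ grayBit k b := by
  obtain ⟨k, hk⟩ := exists_testBit_ne_of_ne (gray_injective.ne hab)
  exact ⟨k, lt_of_testBit_ne (gray_lt_two_pow ha) (gray_lt_two_pow hb) hk, hk⟩

theorem exists_grayBit_ne_and_eq_succ {N a b : ℕ} (ha : a < 2 ^ N) (hb : b < 2 ^ N)
    (hab : a ≠ b) (hab' : a ≠ b + 1) :
    ∃ k < N, grayBit k a ≠ grayBit k b ∧ grayBit k b = grayBit k (b + 1) := by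
  obtain ⟨s, hs⟩ := exists_gray_xor_gray_add_one_eq_two_pow b
  obtain ⟨k, hk, hk'⟩ :=
    exists_testBit_ne_and_eq (gray_injective.ne hab) (gray_injective.ne hab') hs
  exact ⟨k, lt_of_testBit_ne (gray_lt_two_pow ha) (gray_lt_two_pow hb) hk, hk, hk'⟩

theorem exists_matches_of_two_le_dist {N i j : ℕ} (hi : i < 2 ^ (N + 1)) (hj : j < 2 ^ (N + 1))
    (hij : i + 2 ≤ j ∨ j + 2 ≤ i) :
    ∃ k < N, Matches (parityAssignment k) i j ∨ Matches (grayAssignment k) i j := by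
  rw [pow_succ] at hi hj
  by_cases hpar : i % 2 = j % 2
  · obtain ⟨k, hk, hne⟩ :=
      exists_grayBit_ne (N := N) (a := i / 2) (b := j / 2) (by omega) (by omega) (by omega)
    exact ⟨k, hk, .inl (parityAssignment_matches hpar hne)⟩
  obtain ⟨a, rfl | rfl⟩ := i.even_or_odd' <;> obtain ⟨b, rfl | rfl⟩ := j.even_or_odd' <;>
    try omega
  · obtain ⟨k, hk, hne, heq⟩ := exists_grayBit_ne_and_eq_succ (N := N) (a := a) (b := b)
      (by omega) (by omega) (by omega) (by omega)
    exact ⟨k, hk, .inr (grayAssignment_matches hne heq)⟩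
  · obtain ⟨k, hk, hne, heq⟩ := exists_grayBit_ne_and_eq_succ (N := N) (a := b) (b := a)
      (by omega) (by omega) (by omega) (by omega)
    exact ⟨k, hk, .inr (grayAssignment_matches hne heq).symm⟩

theorem two_mul_log_two_le_three_mul_log (ℓ : ℕ) :
    ((2 * Nat.log 2 ℓ : ℕ) : ℝ) ≤ 3 * Real.log ℓ := by
  have hlogb : (Nat.log 2 ℓ : ℝ) ≤ Real.log ℓ / Real.log 2 := by
    simpa [Real.logb] using Real.natLog_le_logb ℓ 2
  have hlog2 : (2 / 3 : ℝ) < Real.log 2 := by linarith [Real.log_two_gt_d9]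
  have hlogℓ : 0 ≤ Real.log ℓ := Real.log_natCast_nonneg ℓ
  rw [le_div_iff₀ (by linarith)] at hlogb
  push_cast
  nlinarith

/-- There is a universal constant `C` such that for every `ℓ ≥ 1` there
exists a family of `t ≤ C·log ℓ` assignments such that every pair `(i,j)` with
`|i − j| ≥ 2` is matched (i.e. `p_i = p_j` and `q_i ≠ q_j`) by at least one assignment. -/
theorem assignments_match_far_pairs :
    ∃ C : ℝ, 0 < C ∧
      ∀ ℓ : ℕ, 0 < ℓ →
        ∃ (t : ℕ) (𝒜 : Fin t → Fin ℓ → Fin 3 × Fin 2),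
          (t : ℝ) ≤ C * Real.log ℓ ∧
          (∀ a, IsAssignment ℓ (𝒜 a)) ∧
          ∀ i j : Fin ℓ, ((i : ℕ) + 2 ≤ (j : ℕ) ∨ (j : ℕ) + 2 ≤ (i : ℕ)) →
            ∃ a, (𝒜 a i).1 = (𝒜 a j).1 ∧ (𝒜 a i).2 ≠ (𝒜 a j).2 := by
  refine ⟨3, by norm_num, fun ℓ _ => ?_⟩
  set N := Nat.log 2 ℓ
  have hℓ : ℓ < 2 ^ (N + 1) := Nat.lt_pow_succ_log_self one_lt_two ℓ
  refine ⟨N + N, Fin.append (fun k i => parityAssignment k i) (fun k i => grayAssignment k i),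
    by simpa [two_mul] using two_mul_log_two_le_three_mul_log ℓ, ?_, ?_⟩
  · refine Fin.addCases (fun k => ?_) (fun k => ?_)
    · rw [Fin.append_left]
      exact isAssignment_of_fst_ne_succ (parityAssignment_fst_ne_succ k) ℓ
    · rw [Fin.append_right]
      exact isAssignment_of_fst_ne_succ (grayAssignment_fst_ne_succ k) ℓ
  · intro i j hij
    obtain ⟨k, hk, h | h⟩ := exists_matches_of_two_le_dist (i.2.trans hℓ) (j.2.trans hℓ) hij
    · exact ⟨Fin.castAdd N ⟨k, hk⟩, by rwa [Fin.append_left]⟩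
    · exact ⟨Fin.natAdd N ⟨k, hk⟩, by rwa [Fin.append_right]⟩
end

section
/- Let G be an undirected weighted graph on n vertices such that no vertex subset U induces a subgraph G[U] with global minimum cut value at least k (i.e., G contains no k-connected component). Then the total edge weight of G satisfies w(G) ≤ k(n−1). -/
/-!
Split a vertex set `U` with `|U| ≥ 2` along a cut `(A, U \ A)` of weight less than `k`. By symmetry
the weight inside `U` is the weight inside `A`, plus the weight inside `U \ A`, plus the cut.
By induction the first two are at most `k(|A| - 1)` and `k(|U \ A| - 1)`, and the cut adds less
than `k`.
-/

open Finset

section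

variable {V : Type*}

/-- Sums over ordered pairs, so `cutWeight w U U` is twice the weight of `G[U]`. -/
def cutWeight {R : Type*} [AddCommMonoid R] (w : V → V → R) (A B : Finset V) : R :=
  ∑ a ∈ A, ∑ b ∈ B, w a b

theorem cutWeight_comm_of_symm {R : Type*} [AddCommMonoid R] {w : V → V → R}
    (hsymm : ∀ a b, w a b = w b a) (A B : Finset V) : cutWeight w B A = cutWeight w A B := by
  unfold cutWeight
  rw [Finset.sum_comm]
  simp_rw [hsymm]

theorem cutWeight_union_union_of_symm [DecidableEq V] {R : Type*} [CommSemiring R] {w : V → V → R}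
    (hsymm : ∀ a b, w a b = w b a) {A B : Finset V} (h : Disjoint A B) :
    cutWeight w (A ∪ B) (A ∪ B) = cutWeight w A A + cutWeight w B B + 2 * cutWeight w A B := by
  have hcross := cutWeight_comm_of_symm hsymm A B
  unfold cutWeight at *
  simp_rw [Finset.sum_union h, Finset.sum_add_distrib]
  rw [hcross]
  ring

theorem cutWeight_self_le_of_forall_cut_lt [DecidableEq V] {w : V → V → ℝ}
    (hsymm : ∀ a b, w a b = w b a) (hdiag : ∀ a, w a a = 0) {k : ℝ}
    (hcut : ∀ U : Finset V, 2 ≤ U.card →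
      ∃ A ⊆ U, A.Nonempty ∧ (U \ A).Nonempty ∧ cutWeight w A (U \ A) < k)
    {U : Finset V} (hU : U.Nonempty) :
    (1 / 2) * cutWeight w U U ≤ k * (U.card - 1) := by
  induction U using Finset.strongInduction with
  | H U ih =>
    rcases Nat.lt_or_ge U.card 2 with hsmall | hlarge
    · have hone : U.card = 1 := by have := hU.card_pos; omega
      obtain ⟨a, rfl⟩ := Finset.card_eq_one.mp hone
      simp [cutWeight, hdiag]
    · obtain ⟨A, hAU, hA, hB, hAB⟩ := hcut U hlarge
      have hA_lt : A ⊂ U := by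
        obtain ⟨b, hb⟩ := hB
        exact Finset.ssubset_iff_of_subset hAU |>.mpr ⟨b, (mem_sdiff.mp hb).1, (mem_sdiff.mp hb).2⟩
      have ihA := ih A hA_lt hA
      have ihB := ih (U \ A) (Finset.sdiff_ssubset hAU hA) hB
      have hcard : k * (U.card - 1) = k * ((U \ A).card - 1) + k * (A.card - 1) + k := by
        rw [← Finset.card_sdiff_add_card_eq_card hAU]
        push_cast
        ring
      have hsplit := cutWeight_union_union_of_symm hsymm (disjoint_sdiff (s := A) (t := U))
      rw [Finset.union_sdiff_of_subset hAU] at hsplit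
      rw [hsplit]
      linarith

end

theorem no_k_connected_component_weight_bound_general {V : Type*} [Fintype V] [DecidableEq V]
    [Nonempty V]
    (w : V → V → ℝ) (hsymm : ∀ a b, w a b = w b a)
    (hdiag : ∀ a, w a a = 0) (k : ℝ)
    (hno : ∀ U : Finset V, 2 ≤ U.card →
      ∃ A ⊆ U, A.Nonempty ∧ (U \ A).Nonempty ∧ (∑ a ∈ A, ∑ b ∈ U \ A, w a b) < k) :
    (1 / 2) * (∑ a, ∑ b, w a b) ≤ k * (Fintype.card V - 1) :=
  cutWeight_self_le_of_forall_cut_lt hsymm hdiag hno univ_nonempty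

/-- Let `G` be an undirected weighted graph on `n ≥ 1` vertices
(symmetric nonnegative weight function `w` with zero diagonal) containing no
`k`-connected component: every vertex subset `U` with `|U| ≥ 2` admits a cut of its
induced subgraph `G[U]` of total weight less than `k`.  Then the total edge weight of
`G` is at most `k·(n − 1)`. -/
theorem no_k_connected_component_weight_bound {V : Type*} [Fintype V] [DecidableEq V]
    [Nonempty V]
    (w : V → V → ℝ) (hsymm : ∀ a b, w a b = w b a) (hnn : ∀ a b, 0 ≤ w a b)
    (hdiag : ∀ a, w a a = 0) (k : ℝ)
    (hno : ∀ U : Finset V, 2 ≤ U.card →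
      ∃ A ⊆ U, A.Nonempty ∧ (U \ A).Nonempty ∧ (∑ a ∈ A, ∑ b ∈ U \ A, w a b) < k) :
    (1 / 2) * (∑ a, ∑ b, w a b) ≤ k * (Fintype.card V - 1) :=
  no_k_connected_component_weight_bound_general w hsymm hdiag k hno
end

section
/- Fix 0 < ε < 1/5. Let 𝒢 be a graph with terminals s,t, let H satisfy (1−ε)w_𝒢(S,T) ≤ w_H(S,T) ≤ (1+ε)w_𝒢(S,T) for all cuts (S,T), let ℱ ⪯ H be a maximum s–t flow subgraph of H, and let K ⪯ H \ ℱ. Suppose (S,T) is an s–t cut with w_K(S,T) ≥ 3ε·ν(H). Then w_𝒢(S,T) ≥ (1−ε)²(1+3ε)·ν(𝒢) > ν(𝒢); in particular, (S,T) is not a minimum s–t cut of 𝒢. -/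
/-!
Since `ℱ` is a maximum flow of `H`, every `s`–`t` cut of `ℱ` already carries `ν(H)`, so a cut on
which the edge-disjoint `K` carries a further `3ε·ν(H)` has `H`-value at least `(1 + 3ε)·ν(H)`.
Transferring through the `(1 ± ε)`-approximation twice (once for `ν(H) ≥ (1 - ε)·ν(𝒢)`, once for
the cut itself, using `1/(1 + ε) ≥ 1 - ε`) gives `w_𝒢(S₀) ≥ (1 - ε)²(1 + 3ε)·ν(𝒢)`, and
`(1 - ε)²(1 + 3ε) - 1 = ε(1 - 5ε + 3ε²) > 0` for `0 < ε < 1/5`.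
-/

section CutValues

variable {V : Type*} (s t : V)

def stCutValues (w : Finset V → ℝ) : Set ℝ :=
  {x | ∃ S : Finset V, s ∈ S ∧ t ∉ S ∧ w S = x}

variable {s t}

theorem mul_le_of_forall_mul_le_stCut {wG wH : Finset V → ℝ} {c νG νH : ℝ} (hc : 0 ≤ c)
    (hνG : νG ∈ lowerBounds (stCutValues s t wG)) (hνH : νH ∈ stCutValues s t wH)
    (h : ∀ S : Finset V, s ∈ S → t ∉ S → c * wG S ≤ wH S) : c * νG ≤ νH := by
  obtain ⟨S, hs, ht, rfl⟩ := hνH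
  calc c * νG ≤ c * wG S := mul_le_mul_of_nonneg_left (hνG ⟨S, hs, ht, rfl⟩) hc
    _ ≤ wH S := h S hs ht

end CutValues

theorem one_sub_sq_mul_le_of_mul_le {ε a b : ℝ} (hε0 : 0 ≤ ε) (hε1 : ε ≤ 1) (ha : 0 ≤ a)
    (h : (1 - ε) * a ≤ (1 + ε) * b) : (1 - ε) ^ 2 * a ≤ b := by
  have hb : 0 ≤ b := by nlinarith
  calc (1 - ε) ^ 2 * a = (1 - ε) * ((1 - ε) * a) := by ring
    _ ≤ (1 - ε) * ((1 + ε) * b) := mul_le_mul_of_nonneg_left h (by linarith)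
    _ = b - ε ^ 2 * b := by ring
    _ ≤ b := by nlinarith

theorem one_lt_one_sub_sq_mul_one_add_three_mul {ε : ℝ} (hε0 : 0 < ε) (hε5 : ε < 1 / 5) :
    1 < (1 - ε) ^ 2 * (1 + 3 * ε) := by
  have : 0 < ε * (1 - 5 * ε + 3 * ε ^ 2) := mul_pos hε0 (by nlinarith)
  linarith [show (1 - ε) ^ 2 * (1 + 3 * ε) = 1 + ε * (1 - 5 * ε + 3 * ε ^ 2) by ring]

/-- Fix `0 < ε < 1/5`.  Let `w𝒢, wH, wF, wK` be the `s`–`t` cut-value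
functions of the graphs `𝒢`, `H`, a maximum `s`–`t` flow subgraph `ℱ ⪯ H`, and
`K ⪯ H \ ℱ` respectively, with minimum `s`–`t` cut values `νG` (of `𝒢`, positive) and
`νH` (of `H`).  Suppose `H` is a `(1 ± ε)`-cut approximation of `𝒢`, every `s`–`t` cut of
`ℱ` has value at least `νH` (since `ℱ` is a maximum flow of `H`), and `ℱ` and `K` are
edge-disjoint subgraphs of `H` (so `wF + wK ≤ wH` on every cut).  If `(S₀, S₀ᶜ)` is an
`s`–`t` cut with `wK(S₀) ≥ 3ε·νH`, then
`w𝒢(S₀) ≥ (1−ε)²(1+3ε)·νG > νG`; in particular `(S₀, S₀ᶜ)` is not a minimum `s`–`t`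
cut of `𝒢`. -/
theorem large_K_cut_not_minimum {V : Type*} (s t : V) (ε : ℝ)
    (hε0 : 0 < ε) (hε5 : ε < 1 / 5)
    (wG wH wF wK : Finset V → ℝ) (νG νH : ℝ)
    (hνG : IsLeast {x | ∃ S : Finset V, s ∈ S ∧ t ∉ S ∧ wG S = x} νG)
    (hνH : IsLeast {x | ∃ S : Finset V, s ∈ S ∧ t ∉ S ∧ wH S = x} νH)
    (hνGpos : 0 < νG)
    (hsp : ∀ S : Finset V, s ∈ S → t ∉ S →
      (1 - ε) * wG S ≤ wH S ∧ wH S ≤ (1 + ε) * wG S)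
    (hflow : ∀ S : Finset V, s ∈ S → t ∉ S → νH ≤ wF S)
    (hdisj : ∀ S : Finset V, s ∈ S → t ∉ S → wF S + wK S ≤ wH S)
    (S₀ : Finset V) (hs : s ∈ S₀) (ht : t ∉ S₀)
    (hK : 3 * ε * νH ≤ wK S₀) :
    (1 - ε) ^ 2 * (1 + 3 * ε) * νG ≤ wG S₀ ∧ νG < wG S₀ := by
  have hνH_ge : (1 - ε) * νG ≤ νH :=
    mul_le_of_forall_mul_le_stCut (by linarith) hνG.2 hνH.1
      fun S hS hS' => (hsp S hS hS').1
  have hH_S₀ : (1 + 3 * ε) * νH ≤ (1 + ε) * wG S₀ := by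
    linarith [hflow S₀ hs ht, hdisj S₀ hs ht, (hsp S₀ hs ht).2]
  have hbound : (1 - ε) ^ 2 * (1 + 3 * ε) * νG ≤ wG S₀ := by
    rw [mul_assoc]
    refine one_sub_sq_mul_le_of_mul_le hε0.le (by linarith) (by positivity) ?_
    calc (1 - ε) * ((1 + 3 * ε) * νG) = (1 + 3 * ε) * ((1 - ε) * νG) := by ring
      _ ≤ (1 + 3 * ε) * νH := mul_le_mul_of_nonneg_left hνH_ge (by linarith)
      _ ≤ (1 + ε) * wG S₀ := hH_S₀
  refine ⟨hbound, lt_of_lt_of_le ?_ hbound⟩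
  exact lt_mul_of_one_lt_left hνGpos (one_lt_one_sub_sq_mul_one_add_three_mul hε0 hε5)
end
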